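/- arXiv:1507.00135 — 5 statements merged into one kernel-verified Lean document; each statement's English description precedes it below -/
import Mathlib

section
/- Let G be an irreducible subgroup of PL_o([a,c]), where a < c. If a < t < t' < c then there exists g ∈ G with g(t') < t. -/
open Set

/-- A map `g : ℝ → ℝ` is *finitary piecewise linear* if there is a finite set of
breakpoints outside of which `g` is locally affine. -/
def IsFinitaryPL (g : ℝ → ℝ) : Prop :=
  ∃ B : Finset ℝ, ∀ t : ℝ, t ∉ B →
    ∃ m b : ℝ, ∃ ε : ℝ, 0 < ε ∧ ∀ u : ℝ, |u - t| < ε → g u = m * u + b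

/-- The support of a map of the real line. -/
def suppOf (g : ℝ → ℝ) : Set ℝ := {t : ℝ | g t ≠ t}

/-- `PLo I` is the set of orientation-preserving (i.e. strictly increasing) finitary
piecewise linear homeomorphisms of `ℝ` with support contained in `I`. -/
def PLo (I : Set ℝ) : Set (Equiv.Perm ℝ) :=
  {g : Equiv.Perm ℝ | StrictMono ⇑g ∧ IsFinitaryPL ⇑g ∧ suppOf ⇑g ⊆ I}

/-- The right derivative of `g` at `a`. -/
noncomputable def rightSlope (g : ℝ → ℝ) (a : ℝ) : ℝ := derivWithin g (Ici a) a

/-- The left derivative of `g` at `c`. -/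
noncomputable def leftSlope (g : ℝ → ℝ) (c : ℝ) : ℝ := derivWithin g (Iic c) c

/-- The amplitude of the translation with which `g` coincides near `+∞`. -/
noncomputable def amplTop (g : ℝ → ℝ) : ℝ :=
  Filter.limUnder Filter.atTop (fun t => g t - t)

/-- The amplitude of the translation with which `g` coincides near `-∞`. -/
noncomputable def amplBot (g : ℝ → ℝ) : ℝ :=
  Filter.limUnder Filter.atBot (fun t => g t - t)

/-- A character of a group is a homomorphism into `(ℝ, +)`. -/
def IsChar {Γ : Type*} [Group Γ] (χ : Γ → ℝ) : Prop :=
  ∀ g h : Γ, χ (g * h) = χ g + χ h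

/-- Two characters lie on the same ray: `ψ` is a positive multiple of `χ`. -/
def SameRayChar {Γ : Type*} (χ ψ : Γ → ℝ) : Prop :=
  ∃ r : ℝ, 0 < r ∧ ∀ g : Γ, ψ g = r * χ g

/-- The subgraph `Γ(G, X)_χ` of the Cayley graph of `G` with respect to the generating
set `X`, spanned by the vertices `g` with `χ g ≥ 0`, is connected. -/
def CayleyConnected {Γ : Type*} [Group Γ] (X : Set Γ) (χ : Γ → ℝ) : Prop :=
  ∀ g h : Γ, 0 ≤ χ g → 0 ≤ χ h →
    Relation.ReflTransGen
      (fun u v : Γ => 0 ≤ χ u ∧ 0 ≤ χ v ∧ ∃ x ∈ X, v = u * x ∨ u = v * x) g h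

/-- `[χ] ∈ Σ¹(G)`: for every generating set `X` of `G` the subgraph `Γ(G,X)_χ`
of the Cayley graph is connected. -/
def MemSigma1 {Γ : Type*} [Group Γ] (χ : Γ → ℝ) : Prop :=
  ∀ X : Set Γ, Subgroup.closure X = ⊤ → CayleyConnected X χ

/-- The character `χ_ℓ = ln ∘ σ_ℓ` of a subgroup `G` of `PL_o([a,c])`. -/
noncomputable def chiL (G : Subgroup (Equiv.Perm ℝ)) (a : ℝ) : G → ℝ :=
  fun g => Real.log (rightSlope (⇑(g : Equiv.Perm ℝ)) a)

/-- The character `χ_r = ln ∘ σ_r` of a subgroup `G` of `PL_o([a,c])`. -/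
noncomputable def chiR (G : Subgroup (Equiv.Perm ℝ)) (c : ℝ) : G → ℝ :=
  fun g => Real.log (leftSlope (⇑(g : Equiv.Perm ℝ)) c)

open MulAction

/-! If every element of `G` kept `t'` at or above `t`, the orbit of `t'` would be bounded below
and `G`, acting by order automorphisms, would fix its infimum, a point of `[t, t'] ⊆ (a, c)`. -/

theorem apply_sInf_orbit_eq {α : Type*} [ConditionallyCompleteLinearOrder α]
    {G : Subgroup (Equiv.Perm α)} (hG : ∀ g ∈ G, StrictMono ⇑g) {x : α}
    (hbdd : BddBelow (orbit G x)) {g : Equiv.Perm α} (hg : g ∈ G) :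
    g (sInf (orbit G x)) = sInf (orbit G x) := by
  let e : α ≃o α := (hG g hg).orderIsoOfSurjective g g.surjective
  have himage : e '' orbit G x = orbit G x := smul_orbit (⟨g, hg⟩ : G) x
  calc g (sInf (orbit G x)) = e (sInf (orbit G x)) := rfl
    _ = sInf (e '' orbit G x) := e.map_csInf' (nonempty_orbit x) hbdd
    _ = sInf (orbit G x) := by rw [himage]

theorem exists_map_below_of_irreducible_general
    (a c : ℝ)
    (G : Subgroup (Equiv.Perm ℝ)) (hG : (G : Set (Equiv.Perm ℝ)) ⊆ PLo (Icc a c))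
    (hirr : ∀ s : ℝ, a < s → s < c → ∃ g ∈ G, g s ≠ s)
    (t t' : ℝ) (hat : a < t) (ht'c : t' < c) :
    ∃ g ∈ G, g t' < t := by
  by_contra! hcon
  have hlower : t ∈ lowerBounds (orbit G t') := by
    rintro _ ⟨g, rfl⟩
    exact hcon g g.2
  have ht_le : t ≤ sInf (orbit G t') := le_csInf (nonempty_orbit t') hlower
  have hle_t' : sInf (orbit G t') ≤ t' := csInf_le ⟨t, hlower⟩ (mem_orbit_self t')
  obtain ⟨g, hg, hmoved⟩ := hirr _ (hat.trans_le ht_le) (hle_t'.trans_lt ht'c)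
  exact hmoved (apply_sInf_orbit_eq (fun g hg => (hG hg).1) ⟨t, hlower⟩ hg)

/-- **Lemma (Statement 3).** If `G ≤ PL_o([a,c])` is irreducible and
`a < t < t' < c`, then some `g ∈ G` satisfies `g(t') < t`. -/
theorem exists_map_below_of_irreducible
    (a c : ℝ) (hac : a < c)
    (G : Subgroup (Equiv.Perm ℝ)) (hG : (G : Set (Equiv.Perm ℝ)) ⊆ PLo (Icc a c))
    (hirr : ∀ s : ℝ, a < s → s < c → ∃ g ∈ G, g s ≠ s)
    (t t' : ℝ) (hat : a < t) (htt' : t < t') (ht'c : t' < c) :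
    ∃ g ∈ G, g t' < t :=
  exists_map_below_of_irreducible_general a c G hG hirr t t' hat ht'c
end

section
/- Let G be an irreducible subgroup of PL_o([a,c]), where a < c. The homomorphisms σ_ℓ and σ_r (restricted to G) are both non-trivial if, and only if, G has a finitely generated irreducible subgroup. -/
open Set

/-!
Near `a`, an element `g` of `PL_o([a,c])` is affine and fixes `a`, so `g t = a + σ_ℓ(g) (t - a)`
on a right neighbourhood of `a`: `g` moves every point there if `σ_ℓ(g) ≠ 1` and fixes every
point there if `σ_ℓ(g) = 1`; likewise at `c`. If both slopes are non-trivial, one element moves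
all points near `a`, another all points near `c`, and by compactness finitely many elements of
`G` move the points of the closed interval in between. Conversely, if `σ_ℓ` is trivial on `G`,
the finitely many generators of a subgroup `H` fix a common right neighbourhood of `a`
pointwise, so `H` is not irreducible.
-/

open Filter Topology

theorem add_mul_sub_eq_self_iff {x σ t : ℝ} (ht : t ≠ x) : x + σ * (t - x) = t ↔ σ = 1 := by
  rw [← sub_eq_zero, show x + σ * (t - x) - t = (σ - 1) * (t - x) by ring, mul_eq_zero,
    sub_eq_zero, sub_eq_zero, or_iff_left ht]

theorem IsOpen.exists_affine_of_locally_affine {g : ℝ → ℝ} {s : Set ℝ} (hs : IsOpen s)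
    (hs' : IsPreconnected s) (hloc : ∀ t ∈ s, ∃ m b : ℝ, ∀ᶠ u in 𝓝 t, g u = m * u + b) :
    ∃ m b : ℝ, ∀ t ∈ s, g t = m * t + b := by
  rcases s.eq_empty_or_nonempty with rfl | ⟨t₀, ht₀⟩
  · simp
  choose! m b hmb using hloc
  have haffine : ∀ (m b t : ℝ), HasDerivAt (fun u => m * u + b) m t := fun m b t => by
    simpa using ((hasDerivAt_id t).const_mul m).add_const b
  have hderiv : ∀ t ∈ s, HasDerivAt g (m t) t := fun t ht =>
    (haffine (m t) (b t) t).congr_of_eventuallyEq (hmb t ht)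
  have hderiv' : ∀ t ∈ s, HasDerivAt (deriv g) 0 t := fun t ht =>
    (hasDerivAt_const t (m t)).congr_of_eventuallyEq <|
      (hmb t ht).eventually_nhds.mono fun u hu => ((haffine _ _ u).congr_of_eventuallyEq hu).deriv
  have hslope : ∀ t ∈ s, deriv g t = m t₀ := fun t ht => by
    rw [hs.is_const_of_deriv_eq_zero hs'
      (fun u hu => (hderiv' u hu).differentiableAt.differentiableWithinAt)
      (fun u hu => (hderiv' u hu).deriv) ht ht₀, (hderiv t₀ ht₀).deriv]
  obtain ⟨b₀, hb₀⟩ := hs.exists_eq_add_of_deriv_eq hs'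
    (fun u hu => (hderiv u hu).differentiableAt.differentiableWithinAt)
    (fun u _ => (haffine (m t₀) 0 u).differentiableAt.differentiableWithinAt)
    (fun u hu => by rw [hslope u hu, (haffine (m t₀) 0 u).deriv])
  exact ⟨m t₀, b₀, fun t ht => by simpa using hb₀ ht⟩

theorem IsFinitaryPL.exists_eventually_affine {g : ℝ → ℝ} (hg : IsFinitaryPL g) (x : ℝ) :
    (∃ m b : ℝ, ∀ᶠ t in 𝓝[>] x, g t = m * t + b) ∧
      (∃ m b : ℝ, ∀ᶠ t in 𝓝[<] x, g t = m * t + b) := by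
  obtain ⟨B, hB⟩ := hg
  have haffine : ∀ p q : ℝ, (∀ t ∈ Ioo p q, t ∉ B) → ∃ m b : ℝ, ∀ t ∈ Ioo p q, g t = m * t + b :=
    fun p q hpq => isOpen_Ioo.exists_affine_of_locally_affine isPreconnected_Ioo fun t ht => by
      obtain ⟨m, b, ε, hε, h⟩ := hB t (hpq t ht)
      exact ⟨m, b, Metric.eventually_nhds_iff.2 ⟨ε, hε, fun u hu => h u hu⟩⟩
  have hB' : ∀ᶠ t in 𝓝[≠] x, t ∉ B := nhdsNE_le_cofinite x B.eventually_cofinite_notMem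
  constructor
  · obtain ⟨q, hxq, hq⟩ := mem_nhdsGT_iff_exists_Ioo_subset.1 <|
      nhdsWithin_mono x (fun t ht => ne_of_gt ht) hB'
    obtain ⟨m, b, h⟩ := haffine x q hq
    exact ⟨m, b, eventually_of_mem (Ioo_mem_nhdsGT hxq) h⟩
  · obtain ⟨p, hpx, hp⟩ := mem_nhdsLT_iff_exists_Ioo_subset.1 <|
      nhdsWithin_mono x (fun t ht => ne_of_lt ht) hB'
    obtain ⟨m, b, h⟩ := haffine p x hp
    exact ⟨m, b, eventually_of_mem (Ioo_mem_nhdsLT hpx) h⟩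

theorem hasDerivWithinAt_and_eventually_eq_of_eventually_affine {g : ℝ → ℝ} {s : Set ℝ} {x m b : ℝ}
    [(𝓝[s] x).NeBot] (hcont : ContinuousAt g x) (hx : g x = x)
    (h : ∀ᶠ t in 𝓝[s] x, g t = m * t + b) :
    HasDerivWithinAt g m s x ∧ ∀ᶠ t in 𝓝[s] x, g t = x + m * (t - x) := by
  have hb : b = x - m * x := by
    have hlim : Tendsto (fun t => m * t + b) (𝓝[s] x) (𝓝 x) :=
      (hx ▸ hcont.tendsto.mono_left nhdsWithin_le_nhds).congr' h
    have := tendsto_nhds_unique hlim (Continuous.tendsto (by fun_prop) x |>.mono_left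
      nhdsWithin_le_nhds)
    linarith
  have hgerm : ∀ᶠ t in 𝓝[s] x, g t = x + m * (t - x) := h.mono fun t ht => by rw [ht, hb]; ring
  refine ⟨?_, hgerm⟩
  have hderiv : HasDerivAt (fun t => x + m * (t - x)) m x := by
    simpa using (((hasDerivAt_id x).sub_const x).const_mul m).const_add x
  exact hderiv.hasDerivWithinAt.congr_of_eventuallyEq hgerm (by rw [hx]; ring)

section PLo

variable {a c : ℝ} {g : Equiv.Perm ℝ}

theorem continuous_of_mem_PLo {I : Set ℝ} (hg : g ∈ PLo I) : Continuous g :=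
  hg.1.monotone.continuous_of_surjective g.surjective

theorem apply_left_eq_self_of_mem_PLo (hg : g ∈ PLo (Icc a c)) : g a = a := by
  have hfix : Iio a ⊆ {t | g t = t} := fun t ht => by
    by_contra hmoved
    exact not_le.2 ht (hg.2.2 hmoved).1
  exact (isClosed_eq (continuous_of_mem_PLo hg) continuous_id).closure_subset_iff.2 hfix
    (by rw [closure_Iio]; exact self_mem_Iic)

theorem apply_right_eq_self_of_mem_PLo (hg : g ∈ PLo (Icc a c)) : g c = c := by
  have hfix : Ioi c ⊆ {t | g t = t} := fun t ht => by
    by_contra hmoved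
    exact not_le.2 ht (hg.2.2 hmoved).2
  exact (isClosed_eq (continuous_of_mem_PLo hg) continuous_id).closure_subset_iff.2 hfix
    (by rw [closure_Ioi]; exact self_mem_Ici)

theorem eventually_apply_eq_self_iff_rightSlope (hg : g ∈ PLo (Icc a c)) :
    ∀ᶠ t in 𝓝[>] a, (g t = t ↔ rightSlope g a = 1) := by
  obtain ⟨⟨m, b, h⟩, -⟩ := hg.2.1.exists_eventually_affine a
  obtain ⟨hderiv, hgerm⟩ := hasDerivWithinAt_and_eventually_eq_of_eventually_affine
    (continuous_of_mem_PLo hg).continuousAt (apply_left_eq_self_of_mem_PLo hg) h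
  have hslope : rightSlope g a = m := by
    rw [rightSlope, ← derivWithin_Ioi_eq_Ici, hderiv.derivWithin (uniqueDiffWithinAt_Ioi a)]
  filter_upwards [hgerm, self_mem_nhdsWithin] with t ht hat
  rw [ht, hslope, add_mul_sub_eq_self_iff (ne_of_gt hat)]

theorem eventually_apply_eq_self_iff_leftSlope (hg : g ∈ PLo (Icc a c)) :
    ∀ᶠ t in 𝓝[<] c, (g t = t ↔ leftSlope g c = 1) := by
  obtain ⟨-, ⟨m, b, h⟩⟩ := hg.2.1.exists_eventually_affine c
  obtain ⟨hderiv, hgerm⟩ := hasDerivWithinAt_and_eventually_eq_of_eventually_affine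
    (continuous_of_mem_PLo hg).continuousAt (apply_right_eq_self_of_mem_PLo hg) h
  have hslope : leftSlope g c = m := by
    rw [leftSlope, hderiv.Iic_of_Iio.derivWithin (uniqueDiffWithinAt_Iic c)]
  filter_upwards [hgerm, self_mem_nhdsWithin] with t ht htc
  rw [ht, hslope, add_mul_sub_eq_self_iff (ne_of_lt htc)]

end PLo

theorem exists_finite_subset_forall_apply_ne_of_isCompact {α : Type*} [TopologicalSpace α]
    [T2Space α] {K : Set α} (hK : IsCompact K) {S : Set (Equiv.Perm α)}
    (hcont : ∀ g ∈ S, Continuous g) (hS : ∀ t ∈ K, ∃ g ∈ S, g t ≠ t) :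
    ∃ F ⊆ S, F.Finite ∧ ∀ t ∈ K, ∃ g ∈ F, g t ≠ t := by
  obtain ⟨F, hFS, hF, hKF⟩ :=
    hK.elim_finite_subcover_image (c := fun g : Equiv.Perm α => {t | g t ≠ t})
    (fun g hg => isOpen_ne_fun (hcont g hg) continuous_id) (fun t ht => by simpa using hS t ht)
  exact ⟨F, hFS, hF, fun t ht => by simpa using hKF ht⟩

theorem Subgroup.FG.eventually_forall_apply_eq_self {α : Type*} {H : Subgroup (Equiv.Perm α)}
    (hH : H.FG) {l : Filter α} (h : ∀ g ∈ H, ∀ᶠ t in l, g t = t) :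
    ∀ᶠ t in l, ∀ g ∈ H, g t = t := by
  obtain ⟨S, rfl⟩ := hH
  filter_upwards [S.finite_toSet.eventually_all.2 fun g hg => h g (Subgroup.subset_closure hg)]
    with t ht g hg
  exact (Subgroup.closure_le (MulAction.stabilizer (Equiv.Perm α) t)).2 ht hg

theorem exists_fg_le_of_eventually_apply_ne {a c : ℝ} (hac : a < c)
    {G : Subgroup (Equiv.Perm ℝ)} (hcont : ∀ g ∈ G, Continuous g)
    (hirr : ∀ t : ℝ, a < t → t < c → ∃ g ∈ G, g t ≠ t)
    (hleft : ∃ g ∈ G, ∀ᶠ t in 𝓝[>] a, g t ≠ t) (hright : ∃ g ∈ G, ∀ᶠ t in 𝓝[<] c, g t ≠ t) :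
    ∃ H : Subgroup (Equiv.Perm ℝ), H ≤ G ∧ H.FG ∧
      ∀ t : ℝ, a < t → t < c → ∃ g ∈ H, g t ≠ t := by
  obtain ⟨g₁, hg₁, h₁⟩ := hleft
  obtain ⟨g₂, hg₂, h₂⟩ := hright
  obtain ⟨p, hap, hp⟩ := mem_nhdsGT_iff_exists_Ioc_subset.1 (h₁.and (Ioo_mem_nhdsGT hac))
  obtain ⟨q, hqc, hq⟩ := mem_nhdsLT_iff_exists_Ico_subset.1 (h₂.and (Ioo_mem_nhdsLT hac))
  obtain ⟨F, hFG, hF, hFmoves⟩ := exists_finite_subset_forall_apply_ne_of_isCompact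
    isCompact_Icc hcont fun t ht => hirr t (hap.trans_le ht.1) (ht.2.trans_lt hqc)
  refine ⟨Subgroup.closure (insert g₁ (insert g₂ F)),
    (Subgroup.closure_le G).2 (insert_subset hg₁ (insert_subset hg₂ hFG)),
    (Subgroup.fg_iff _).2 ⟨_, rfl, (hF.insert g₂).insert g₁⟩, fun t hat htc => ?_⟩
  rcases le_or_gt t p with htp | hpt
  · exact ⟨g₁, Subgroup.subset_closure (mem_insert _ _), (hp ⟨hat, htp⟩).1⟩
  rcases le_or_gt q t with hqt | htq
  · exact ⟨g₂, Subgroup.subset_closure (mem_insert_of_mem _ (mem_insert _ _)), (hq ⟨hqt, htc⟩).1⟩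
  obtain ⟨g, hg, hgt⟩ := hFmoves t ⟨hpt.le, htq.le⟩
  exact ⟨g, Subgroup.subset_closure (mem_insert_of_mem _ (mem_insert_of_mem _ hg)), hgt⟩

/-- **Lemma (Statement 4).** For an irreducible `G ≤ PL_o([a,c])`, the homomorphisms
`σ_ℓ` and `σ_r` are both non-trivial on `G` if and only if `G` has a finitely
generated irreducible subgroup. -/
theorem sigma_nontrivial_iff_fg_irreducible_subgroup
    (a c : ℝ) (hac : a < c)
    (G : Subgroup (Equiv.Perm ℝ)) (hG : (G : Set (Equiv.Perm ℝ)) ⊆ PLo (Icc a c))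
    (hirr : ∀ t : ℝ, a < t → t < c → ∃ g ∈ G, g t ≠ t) :
    ((∃ g ∈ G, rightSlope (⇑g) a ≠ 1) ∧ (∃ g ∈ G, leftSlope (⇑g) c ≠ 1)) ↔
      (∃ H : Subgroup (Equiv.Perm ℝ), H ≤ G ∧ H.FG ∧
        ∀ t : ℝ, a < t → t < c → ∃ g ∈ H, g t ≠ t) := by
  constructor
  · rintro ⟨⟨g₁, hg₁, h₁⟩, ⟨g₂, hg₂, h₂⟩⟩
    exact exists_fg_le_of_eventually_apply_ne hac (fun g hg => continuous_of_mem_PLo (hG hg)) hirr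
      ⟨g₁, hg₁, (eventually_apply_eq_self_iff_rightSlope (hG hg₁)).mono fun _ h => mt h.1 h₁⟩
      ⟨g₂, hg₂, (eventually_apply_eq_self_iff_leftSlope (hG hg₂)).mono fun _ h => mt h.1 h₂⟩
  · rintro ⟨H, hHG, hHfg, hHirr⟩
    have hnot_fixed : ∀ l : Filter ℝ, [l.NeBot] → Ioo a c ∈ l →
        ¬ ∀ g ∈ H, ∀ᶠ t in l, g t = t := fun l _ hl hfix => by
      obtain ⟨t, hfixt, hat, htc⟩ := ((hHfg.eventually_forall_apply_eq_self hfix).and hl).exists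
      obtain ⟨g, hg, hgt⟩ := hHirr t hat htc
      exact hgt (hfixt g hg)
    refine ⟨?_, ?_⟩ <;> by_contra! hslope
    · exact hnot_fixed _ (Ioo_mem_nhdsGT hac) fun g hg =>
        (eventually_apply_eq_self_iff_rightSlope (hG (hHG hg))).mono
          fun _ h => h.2 (hslope g (hHG hg))
    · exact hnot_fixed _ (Ioo_mem_nhdsLT hac) fun g hg =>
        (eventually_apply_eq_self_iff_leftSlope (hG (hHG hg))).mono
          fun _ h => h.2 (hslope g (hHG hg))
end

section
/- Let G be a group and χ : G → ℝ a non-zero character. Suppose G is the union of a collection {G_j : j ∈ J} of finitely generated subgroups such that: (i) for every j ∈ J the restriction χ_j = χ|G_j is non-zero and [χ_j] ∈ Σ¹(G_j); and (ii) the combinatorial graph with vertex set J and with an edge {j₁, j₂} whenever χ(G_{j₁} ∩ G_{j₂}) ≠ {0} is connected. Then [χ] ∈ Σ¹(G). -/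
/-
Fix a generating set `X` of `G` and call `z ∈ G` admissible when every edge `u — u z` with both
ends in `G_χ` can be replaced by a path in `Γ(G, X)_χ`; the claim is that every element is
admissible. Generators are. If a subgroup `H` with `[χ|H] ∈ Σ¹(H)` contains an admissible `t`
with `χ t > 0`, then for every `w ∈ H` both `t ^ m` and `t ^ m w` are admissible once `m` is
large, so the admissible elements generate `H`; a path in `Γ(H, ·)_χ` from `1` to `z` built from
them then shows that all of `H` is admissible. An edge `{j₁, j₂}` of the graph on `J` supplies an
element of `G_{j₁} ∩ G_{j₂}` of non-zero character, so admissibility with positive character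
spreads from one `G_j` to all of them, and the `G_j` cover `G`.
-/

open Set

open Relation

namespace IsChar

variable {Γ : Type*} [Group Γ] {χ : Γ → ℝ}

def toMonoidHom (hχ : IsChar χ) : Γ →* Multiplicative ℝ :=
  MonoidHom.mk' (fun g => Multiplicative.ofAdd (χ g)) hχ

lemma toMonoidHom_apply (hχ : IsChar χ) (g : Γ) :
    hχ.toMonoidHom g = Multiplicative.ofAdd (χ g) :=
  rfl

lemma map_one (hχ : IsChar χ) : χ 1 = 0 :=
  _root_.map_one hχ.toMonoidHom

lemma map_inv (hχ : IsChar χ) (g : Γ) : χ g⁻¹ = -χ g :=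
  _root_.map_inv hχ.toMonoidHom g

lemma map_pow (hχ : IsChar χ) (g : Γ) (n : ℕ) : χ (g ^ n) = n * χ g := by
  have h := _root_.map_pow hχ.toMonoidHom g n
  rw [toMonoidHom_apply, toMonoidHom_apply, ← ofAdd_nsmul] at h
  exact (Multiplicative.ofAdd.injective h).trans (nsmul_eq_mul _ _)

lemma exists_mem_ne_zero_of_closure_eq_top (hχ : IsChar χ) {X : Set Γ}
    (hX : Subgroup.closure X = ⊤) {g : Γ} (hg : χ g ≠ 0) : ∃ x ∈ X, χ x ≠ 0 := by
  by_contra! h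
  have hker : Subgroup.closure X ≤ hχ.toMonoidHom.ker :=
    (Subgroup.closure_le _).2 fun x hx => by
      rw [SetLike.mem_coe, MonoidHom.mem_ker, toMonoidHom_apply, h x hx, ofAdd_zero]
  exact hg (MonoidHom.mem_ker.1 (hker (hX ▸ Subgroup.mem_top g)))

end IsChar

namespace Sigma1

variable {Γ : Type*} [Group Γ] {χ : Γ → ℝ} {X : Set Γ}

def CayleyAdj (χ : Γ → ℝ) (X : Set Γ) (u v : Γ) : Prop :=
  0 ≤ χ u ∧ 0 ≤ χ v ∧ ∃ x ∈ X, v = u * x ∨ u = v * x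

instance : Std.Symm (CayleyAdj χ X) :=
  ⟨fun _ _ ⟨hu, hv, x, hx, h⟩ => ⟨hv, hu, x, hx, h.symm⟩⟩

def Admissible (χ : Γ → ℝ) (X : Set Γ) (z : Γ) : Prop :=
  ∀ u, 0 ≤ χ u → 0 ≤ χ (u * z) → ReflTransGen (CayleyAdj χ X) u (u * z)

lemma admissible_of_mem {x : Γ} (hx : x ∈ X) : Admissible χ X x :=
  fun _ hu hux => .single ⟨hu, hux, x, hx, .inl rfl⟩

lemma Admissible.inv {z : Γ} (hz : Admissible χ X z) : Admissible χ X z⁻¹ := by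
  intro u hu huz
  have h := hz (u * z⁻¹) huz (by rwa [inv_mul_cancel_right])
  rw [inv_mul_cancel_right] at h
  exact symm h

lemma Admissible.reflTransGen_mul_pow (hχ : IsChar χ) {t : Γ} (ht : Admissible χ X t)
    (htpos : 0 < χ t) {u : Γ} (hu : 0 ≤ χ u) (m : ℕ) :
    ReflTransGen (CayleyAdj χ X) u (u * t ^ m) := by
  induction m with
  | zero => rw [pow_zero, mul_one]
  | succ m ih =>
    have hm : 0 ≤ χ (u * t ^ m) := by
      rw [hχ, hχ.map_pow]
      positivity
    rw [pow_succ, ← mul_assoc]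
    exact ih.trans (ht _ hm (by rw [hχ]; linarith))

lemma Admissible.pow (hχ : IsChar χ) {t : Γ} (ht : Admissible χ X t) (htpos : 0 < χ t)
    (m : ℕ) : Admissible χ X (t ^ m) :=
  fun _ hu _ => ht.reflTransGen_mul_pow hχ htpos hu m

lemma exists_forall_reflTransGen_mul (hχ : IsChar χ) (hX : Subgroup.closure X = ⊤) (z : Γ) :
    ∃ M, 0 ≤ M ∧ ∀ p, M ≤ χ p → ReflTransGen (CayleyAdj χ X) p (p * z) := by
  have hz : z ∈ Subgroup.closure X := hX ▸ Subgroup.mem_top z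
  induction hz using Subgroup.closure_induction with
  | mem x hx =>
    refine ⟨max 0 (-χ x), le_max_left _ _, fun p hp => admissible_of_mem hx p ?_ ?_⟩
    · exact (le_max_left _ _).trans hp
    · rw [hχ]
      linarith [le_max_right 0 (-χ x)]
  | one => exact ⟨0, le_rfl, fun p _ => by rw [mul_one]⟩
  | mul x y _ _ ihx ihy =>
    obtain ⟨M₁, hM₁, hx⟩ := ihx
    obtain ⟨M₂, -, hy⟩ := ihy
    refine ⟨max M₁ (M₂ - χ x), hM₁.trans (le_max_left _ _), fun p hp => ?_⟩
    rw [← mul_assoc]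
    refine (hx p ((le_max_left _ _).trans hp)).trans (hy _ ?_)
    rw [hχ]
    linarith [le_max_right M₁ (M₂ - χ x)]
  | inv x _ ih =>
    obtain ⟨M, -, hx⟩ := ih
    refine ⟨max 0 (M + χ x), le_max_left _ _, fun p hp => ?_⟩
    have h := hx (p * x⁻¹) (by rw [hχ, hχ.map_inv]; linarith [le_max_right 0 (M + χ x)])
    rw [inv_mul_cancel_right] at h
    exact symm h

lemma Admissible.exists_pow_mul (hχ : IsChar χ) (hX : Subgroup.closure X = ⊤) {t : Γ}
    (ht : Admissible χ X t) (htpos : 0 < χ t) (w : Γ) :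
    ∃ m : ℕ, Admissible χ X (t ^ m * w) := by
  obtain ⟨M, hM, hw⟩ := exists_forall_reflTransGen_mul hχ hX w
  obtain ⟨m, hm⟩ := exists_nat_ge (M / χ t)
  refine ⟨m, fun u hu _ => ?_⟩
  have hMm : M ≤ χ (u * t ^ m) := by
    rw [hχ, hχ.map_pow]
    nlinarith [(div_le_iff₀ htpos).1 hm]
  rw [← mul_assoc]
  exact (ht.reflTransGen_mul_pow hχ htpos hu m).trans (hw _ hMm)

lemma closure_admissible_eq_top (hχ : IsChar χ) (hX : Subgroup.closure X = ⊤)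
    {H : Subgroup Γ} {t : Γ} (htH : t ∈ H) (ht : Admissible χ X t) (htpos : 0 < χ t) :
    Subgroup.closure ((↑) ⁻¹' {z | Admissible χ X z} : Set H) = ⊤ := by
  refine eq_top_iff.2 fun w _ => ?_
  obtain ⟨m, hm⟩ := ht.exists_pow_mul hχ hX htpos w
  have hpow : (⟨t, htH⟩ : H) ^ m ∈ Subgroup.closure ((↑) ⁻¹' {z | Admissible χ X z}) :=
    Subgroup.subset_closure (by simpa using ht.pow hχ htpos m)
  have hpow_mul : (⟨t, htH⟩ : H) ^ m * w ∈ Subgroup.closure ((↑) ⁻¹' {z | Admissible χ X z}) :=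
    Subgroup.subset_closure (by simpa using hm)
  simpa using mul_mem (inv_mem hpow) hpow_mul

lemma reflTransGen_mul_of_reflTransGen_subgroup (hχ : IsChar χ) {H : Subgroup Γ} {W : Set H}
    (hW : ∀ w ∈ W, Admissible χ X w) {u : Γ} (hu : 0 ≤ χ u) {a b : H}
    (hab : ReflTransGen (CayleyAdj (fun g : H => χ g) W) a b) :
    ReflTransGen (CayleyAdj χ X) (u * a) (u * b) := by
  refine hab.lift' (fun c : H => u * c) fun c d ⟨hc, hd, w, hw, hcd⟩ => ?_
  rcases hcd with rfl | rfl
  · show ReflTransGen _ (u * c) (u * (c * w : H))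
    simpa [mul_assoc] using hW w hw (u * c) (by rw [hχ]; positivity)
      (by rw [mul_assoc, hχ]; exact add_nonneg hu hd)
  · show ReflTransGen _ (u * (d * w : H)) (u * d)
    simpa [mul_assoc] using symm (hW w hw (u * d) (by rw [hχ]; positivity)
      (by rw [mul_assoc, hχ]; exact add_nonneg hu hc))

lemma reflTransGen_mul_of_memSigma1 (hχ : IsChar χ) (hX : Subgroup.closure X = ⊤)
    {H : Subgroup Γ} (hH : MemSigma1 (fun g : H => χ g)) {t : Γ} (htH : t ∈ H)
    (ht : Admissible χ X t) (htpos : 0 < χ t) {z : Γ} (hzH : z ∈ H) (hz : 0 ≤ χ z) {u : Γ}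
    (hu : 0 ≤ χ u) : ReflTransGen (CayleyAdj χ X) u (u * z) := by
  have hpath := hH _ (closure_admissible_eq_top hχ hX htH ht htpos) 1 ⟨z, hzH⟩
    (by simp [hχ.map_one]) hz
  simpa using reflTransGen_mul_of_reflTransGen_subgroup hχ (fun w hw => hw) hu hpath

lemma admissible_of_memSigma1 (hχ : IsChar χ) (hX : Subgroup.closure X = ⊤)
    {H : Subgroup Γ} (hH : MemSigma1 (fun g : H => χ g)) {t : Γ} (htH : t ∈ H)
    (ht : Admissible χ X t) (htpos : 0 < χ t) {z : Γ} (hzH : z ∈ H) : Admissible χ X z := by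
  rcases le_or_gt 0 (χ z) with hz | hz
  · exact fun u hu _ => reflTransGen_mul_of_memSigma1 hχ hX hH htH ht htpos hzH hz hu
  · have hinv : Admissible χ X z⁻¹ := fun u hu _ =>
      reflTransGen_mul_of_memSigma1 hχ hX hH htH ht htpos (inv_mem hzH)
        (by rw [hχ.map_inv]; linarith) hu
    simpa using hinv.inv

lemma Admissible.exists_pos_mem (hχ : IsChar χ) {K : Subgroup Γ} {z : Γ}
    (hz : Admissible χ X z) (hzK : z ∈ K) (hz0 : χ z ≠ 0) :
    ∃ t ∈ K, Admissible χ X t ∧ 0 < χ t := by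
  rcases hz0.lt_or_gt with hneg | hpos
  · exact ⟨z⁻¹, inv_mem hzK, hz.inv, by rw [hχ.map_inv]; linarith⟩
  · exact ⟨z, hzK, hz, hpos⟩

lemma cayleyConnected_of_forall_admissible (h : ∀ z, Admissible χ X z) :
    CayleyConnected X χ := fun g g' hg hg' => by
  have hpath := h (g⁻¹ * g') g hg (by rwa [mul_inv_cancel_left])
  rwa [mul_inv_cancel_left] at hpath

end Sigma1

open Sigma1

theorem memSigma1_of_union_of_fg_subgroups_general
    {Γ : Type*} [Group Γ] (χ : Γ → ℝ) (hχ : IsChar χ)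
    {J : Type*} (𝒢 : J → Subgroup Γ)
    (hunion : ∀ g : Γ, ∃ j : J, g ∈ 𝒢 j)
    (hres : ∀ j : J, (∃ g : 𝒢 j, χ (g : Γ) ≠ 0) ∧ MemSigma1 (fun g : 𝒢 j => χ (g : Γ)))
    (hconn : ∀ j₁ j₂ : J, Relation.ReflTransGen
        (fun i₁ i₂ : J => ∃ g : Γ, g ∈ 𝒢 i₁ ⊓ 𝒢 i₂ ∧ χ g ≠ 0) j₁ j₂) :
    MemSigma1 χ := by
  intro X hX
  obtain ⟨j, -⟩ := hunion 1
  obtain ⟨g, hg⟩ := (hres j).1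
  obtain ⟨x, hxX, hx⟩ := hχ.exists_mem_ne_zero_of_closure_eq_top hX hg
  obtain ⟨j₀, hxj₀⟩ := hunion x
  have hseed : ∀ j, ∃ t ∈ 𝒢 j, Admissible χ X t ∧ 0 < χ t := fun j => by
    induction hconn j₀ j with
    | refl => exact (admissible_of_mem hxX).exists_pos_mem hχ hxj₀ hx
    | @tail j₁ j₂ _ hedge ih =>
      obtain ⟨t, htj, ht, htpos⟩ := ih
      obtain ⟨w, hw, hw0⟩ := hedge
      exact (admissible_of_memSigma1 hχ hX (hres j₁).2 htj ht htpos hw.1).exists_pos_mem hχ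
        hw.2 hw0
  refine cayleyConnected_of_forall_admissible fun z => ?_
  obtain ⟨j, hzj⟩ := hunion z
  obtain ⟨t, htj, ht, htpos⟩ := hseed j
  exact admissible_of_memSigma1 hχ hX (hres j).2 htj ht htpos hzj

/-- **Proposition (Statement 5).** If `G` is a union of finitely generated subgroups
`G_j` on each of which the non-zero character `χ` restricts non-trivially to a point
of `Σ¹(G_j)`, and the graph on `J` with edges `{j₁,j₂}` whenever
`χ(G_{j₁} ∩ G_{j₂}) ≠ {0}` is connected, then `[χ] ∈ Σ¹(G)`. -/
theorem memSigma1_of_union_of_fg_subgroups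
    {Γ : Type*} [Group Γ] (χ : Γ → ℝ) (hχ : IsChar χ) (hne : χ ≠ 0)
    {J : Type*} (𝒢 : J → Subgroup Γ)
    (hunion : ∀ g : Γ, ∃ j : J, g ∈ 𝒢 j)
    (hfg : ∀ j : J, (𝒢 j).FG)
    (hres : ∀ j : J, (∃ g : 𝒢 j, χ (g : Γ) ≠ 0) ∧ MemSigma1 (fun g : 𝒢 j => χ (g : Γ)))
    (hconn : ∀ j₁ j₂ : J, Relation.ReflTransGen
        (fun i₁ i₂ : J => ∃ g : Γ, g ∈ 𝒢 i₁ ⊓ 𝒢 i₂ ∧ χ g ≠ 0) j₁ j₂) :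
    MemSigma1 χ :=
  memSigma1_of_union_of_fg_subgroups_general χ hχ 𝒢 hunion hres hconn
end

section
/- Let G be a group, χ : G → ℝ a non-zero character, and set G_χ = {g ∈ G : χ(g) ≥ 0}. Suppose G_χ contains a submonoid M with M ∩ ker χ = M ∩ M⁻¹, (M·M⁻¹) ∩ G_χ = M, and M generates G as a group. If M is properly contained in G_χ, then [χ] ∉ Σ¹(G); that is, there exists a generating set X of G for which the subgraph Γ(G,X)_χ is not connected. -/
open Set

/-!
With the generating set `X = M`, an edge of `Γ(G, M)_χ` leaving a vertex of `M` ends in `M`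
again: forwards it multiplies by an element of `M`, backwards it lands in `(M·M⁻¹) ∩ G_χ = M`.
So the component of `1` is contained in `M` and misses any `g ∈ G_χ \ M`.
-/

open Relation

section

variable {Γ : Type*} [Group Γ]

theorem Submonoid.mem_of_reflTransGen_cayley {χ : Γ → ℝ} {M : Submonoid Γ}
    (hquot : ∀ m₁ ∈ M, ∀ m₂ ∈ M, 0 ≤ χ (m₁ * m₂⁻¹) → m₁ * m₂⁻¹ ∈ M) {g : Γ}
    (hg : ReflTransGen
      (fun u v : Γ => 0 ≤ χ u ∧ 0 ≤ χ v ∧ ∃ x ∈ (M : Set Γ), v = u * x ∨ u = v * x) 1 g) :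
    g ∈ M := by
  induction hg with
  | refl => exact M.one_mem
  | tail _ hstep hb =>
    obtain ⟨-, hc, x, hx, rfl | rfl⟩ := hstep
    · exact M.mul_mem hb hx
    · simpa using hquot _ hb x hx (by simpa using hc)

theorem Submonoid.not_cayleyConnected {χ : Γ → ℝ} {M : Submonoid Γ}
    (hquot : ∀ m₁ ∈ M, ∀ m₂ ∈ M, 0 ≤ χ (m₁ * m₂⁻¹) → m₁ * m₂⁻¹ ∈ M) (h1 : 0 ≤ χ 1)
    {g : Γ} (hg : 0 ≤ χ g) (hgM : g ∉ M) :
    ¬ CayleyConnected (M : Set Γ) χ := fun hconn =>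
  hgM (M.mem_of_reflTransGen_cayley hquot (hconn 1 g h1 hg))

end

theorem not_memSigma1_of_proper_submonoid_general
    {Γ : Type*} [Group Γ] (χ : Γ → ℝ)
    (M : Submonoid Γ)
    (hsub : (M : Set Γ) ⊆ {g : Γ | 0 ≤ χ g})
    (hquot : {g : Γ | (∃ m₁ ∈ M, ∃ m₂ ∈ M, g = m₁ * m₂⁻¹) ∧ 0 ≤ χ g} = (M : Set Γ))
    (hgen : Subgroup.closure (M : Set Γ) = ⊤)
    (hproper : ∃ g : Γ, 0 ≤ χ g ∧ g ∉ M) :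
    ¬ MemSigma1 χ := by
  obtain ⟨g, hg, hgM⟩ := hproper
  have hquot' : ∀ m₁ ∈ M, ∀ m₂ ∈ M, 0 ≤ χ (m₁ * m₂⁻¹) → m₁ * m₂⁻¹ ∈ M :=
    fun m₁ h₁ m₂ h₂ h0 => hquot.subset ⟨⟨m₁, h₁, m₂, h₂, rfl⟩, h0⟩
  exact fun hmem => M.not_cayleyConnected hquot' (hsub M.one_mem) hg hgM (hmem _ hgen)

/-- **Proposition (Statement 6).** Let `χ` be a non-zero character of `G` and suppose
the submonoid `G_χ = {g : χ(g) ≥ 0}` contains a submonoid `M` with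
`M ∩ ker χ = M ∩ M⁻¹`, `(M·M⁻¹) ∩ G_χ = M` and `gp(M) = G`. If `M ⊊ G_χ`, then
`[χ] ∉ Σ¹(G)`. -/
theorem not_memSigma1_of_proper_submonoid
    {Γ : Type*} [Group Γ] (χ : Γ → ℝ) (hχ : IsChar χ) (hne : χ ≠ 0)
    (M : Submonoid Γ)
    (hsub : (M : Set Γ) ⊆ {g : Γ | 0 ≤ χ g})
    (hker : {g : Γ | g ∈ M ∧ χ g = 0} = {g : Γ | g ∈ M ∧ g⁻¹ ∈ M})
    (hquot : {g : Γ | (∃ m₁ ∈ M, ∃ m₂ ∈ M, g = m₁ * m₂⁻¹) ∧ 0 ≤ χ g} = (M : Set Γ))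
    (hgen : Subgroup.closure (M : Set Γ) = ⊤)
    (hproper : ∃ g : Γ, 0 ≤ χ g ∧ g ∉ M) :
    ¬ MemSigma1 χ :=
  not_memSigma1_of_proper_submonoid_general χ M hsub hquot hgen hproper
end

section
/- Let G be a non-abelian, irreducible subgroup of PL_o([a,c]), where a < c. If the character χ_ℓ = ln∘σ_ℓ (restricted to G) is non-zero, then [χ_ℓ] ∉ Σ¹(G). Similarly, if χ_r = ln∘σ_r is non-zero then [χ_r] ∉ Σ¹(G). -/
/-!
Every element of `PL_o([a,c])` agrees near `a` with a homothety centred at `a`, whose ratio is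
`σ_ℓ`. Fix `l ∈ G` with `σ_ℓ(l) < 1`, linear on `[a, a + e]`, and put `δ = σ_ℓ(l) e`. The elements
`x` such that `x` and `x⁻¹` are linear on `[a, a + δ]` form a generating set `X` of `G`: once the
slope of `g` is brought into `(σ_ℓ(l), 1]` by a power of `l`, conjugating by a high power of `l`
stretches its linear germ over `[a, a + e]`. Along an edge path of `Γ(G,X)_χ` starting at `1`, the
inverse `w⁻¹` of the current vertex stays linear on `[a, a + δ]`, because `σ_ℓ(w⁻¹) ≤ 1` keeps
`[a, a + δ]` inside itself. On the other hand `G` is non-abelian, so some commutator `k ≠ 1` has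
`σ_ℓ(k) = 1`; by irreducibility the orbit of a point moved by `k` accumulates at `a`, so a
conjugate of `k` moves a point of `[a, a + δ]` while having slope `1` at `a`. That vertex lies in
`Γ(G,X)_χ` but not in the component of `1`. The statement for `χ_r` follows by conjugating with
`t ↦ a + c - t`.
-/

open Set

open Filter Topology Equiv

def HomothetyOn (a m e : ℝ) (g : ℝ → ℝ) : Prop :=
  EqOn g (fun t => a + m * (t - a)) (Icc a (a + e))

def IsHomothetyOn (a e : ℝ) (g : ℝ → ℝ) : Prop :=
  ∃ m, HomothetyOn a m e g

namespace HomothetyOn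

variable {a m m' e e' : ℝ}

theorem mono {g : ℝ → ℝ} (hg : HomothetyOn a m e g) (he : e' ≤ e) : HomothetyOn a m e' g :=
  Set.EqOn.mono (Icc_subset_Icc_right (by linarith)) hg

theorem comp {g h : ℝ → ℝ} (hg : HomothetyOn a m e g) (hh : HomothetyOn a m' e' h)
    (hm' : 0 ≤ m') (he : m' * e' ≤ e) : HomothetyOn a (m * m') e' (g ∘ h) := by
  intro t ht
  have hht : h t ∈ Icc a (a + e) := by
    rw [hh ht]
    constructor <;> nlinarith [ht.1, ht.2]
  simp only [Function.comp_apply]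
  rw [hg hht, hh ht]
  ring

theorem rightSlope_eq {g : ℝ → ℝ} (hg : HomothetyOn a m e g) (he : 0 < e) :
    rightSlope g a = m := by
  have hlin : HasDerivWithinAt (fun t => a + m * (t - a)) m (Ici a) a := by
    simpa using ((((hasDerivAt_id a).sub_const a).const_mul m).const_add a).hasDerivWithinAt
  have hga : g a = a + m * (a - a) := hg (left_mem_Icc.2 (by linarith))
  exact (hlin.congr_of_eventuallyEq (mem_of_superset (Icc_mem_nhdsGE (by linarith)) hg) hga
    ).derivWithin (uniqueDiffOn_Ici a a self_mem_Ici)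

theorem inv {g : Perm ℝ} (hg : HomothetyOn a m e g) (hm : 0 < m) :
    HomothetyOn a m⁻¹ (m * e) ⇑g⁻¹ := by
  intro t ht
  have hu : a + m⁻¹ * (t - a) ∈ Icc a (a + e) := by
    have hinv : 0 < m⁻¹ := inv_pos.2 hm
    constructor
    · nlinarith [ht.1]
    · have : m⁻¹ * (t - a) ≤ m⁻¹ * (m * e) := by nlinarith [ht.2]
      rw [inv_mul_cancel_left₀ hm.ne'] at this
      linarith
  rw [Perm.inv_eq_iff_eq, hg hu]
  field_simp
  ring

theorem pow {g : Perm ℝ} (hg : HomothetyOn a m e g) (hm0 : 0 ≤ m) (hm1 : m ≤ 1) (he : 0 ≤ e)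
    (n : ℕ) : HomothetyOn a (m ^ n) e ⇑(g ^ n) := by
  induction n with
  | zero => intro t _; simp
  | succ n ih =>
    rw [pow_succ', pow_succ', Perm.coe_mul]
    exact hg.comp ih (pow_nonneg hm0 n) (mul_le_of_le_one_left he (pow_le_one₀ hm0 hm1))

theorem conj_pow {q : ℝ} {l g : Perm ℝ} (hl : HomothetyOn a q e l)
    (hq0 : 0 < q) (hq1 : q ≤ 1) (he : 0 ≤ e) (hg : HomothetyOn a m e' g) (hm0 : 0 ≤ m)
    (hm1 : m ≤ 1) {N : ℕ} (hN : q ^ N * e ≤ e') :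
    HomothetyOn a m e ⇑((l ^ N)⁻¹ * g * l ^ N) := by
  have hlN := hl.pow hq0.le hq1 he N
  have hqN : 0 < q ^ N := pow_pos hq0 N
  have hgl := (hlN.inv hqN).comp (hg.comp hlN hqN.le hN) (by positivity)
    (by nlinarith [mul_le_of_le_one_left (mul_nonneg hqN.le he) hm1])
  show HomothetyOn a m e (⇑(l ^ N)⁻¹ ∘ ⇑g ∘ ⇑(l ^ N))
  convert hgl using 1
  field_simp

end HomothetyOn

theorem exists_eqOn_affine_of_locally_affine {g : ℝ → ℝ} {s : Set ℝ} (hs : IsPreconnected s)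
    (hg : ∀ t ∈ s, ∃ m b : ℝ, ∀ᶠ u in 𝓝 t, g u = m * u + b) :
    ∃ m b : ℝ, EqOn g (fun u => m * u + b) s := by
  rcases s.eq_empty_or_nonempty with rfl | ⟨t₀, ht₀⟩
  · exact ⟨0, 0, eqOn_empty _ _⟩
  -- the affine coefficients of `g` can be read off its germ, so they are locally constant
  set coeff : ℝ → ℝ × ℝ := fun t => (deriv g t, g t - deriv g t * t)
  have hloc : ∀ t ∈ s, (coeff : Germ (𝓝 t) (ℝ × ℝ)).IsConstant := by
    intro t ht
    obtain ⟨m, b, hmb⟩ := hg t ht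
    refine ⟨(m, b), ?_⟩
    filter_upwards [hmb.eventually_nhds] with u hu
    have hd : deriv g u = m := by
      rw [(show g =ᶠ[𝓝 u] fun v => m * v + b from hu).deriv_eq]
      simp
    simp [coeff, hd, hu.self_of_nhds]
  refine ⟨deriv g t₀, g t₀ - deriv g t₀ * t₀, fun t ht => ?_⟩
  have h := eq_of_germ_isConstant_on hloc hs ht ht₀
  simp only [coeff, Prod.mk.injEq] at h
  rw [← h.2, h.1]
  ring

theorem PLo_mono {I J : Set ℝ} (h : I ⊆ J) : PLo I ⊆ PLo J :=
  fun _ hg => ⟨hg.1, hg.2.1, hg.2.2.trans h⟩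

namespace PLo

variable {a : ℝ} {I : Set ℝ} {g h : Perm ℝ}

theorem continuous (hg : g ∈ PLo I) : Continuous g :=
  hg.1.monotone.continuous_of_surjective g.surjective

theorem apply_eq_self (hg : g ∈ PLo I) {t : ℝ} (ht : t ∉ interior I) : g t = t := by
  by_contra hne
  exact ht (interior_maximal hg.2.2 (isOpen_ne_fun (PLo.continuous hg) continuous_id) hne)

theorem apply_eq_of_Ici (hg : g ∈ PLo (Ici a)) : g a = a :=
  apply_eq_self hg (by simp)

theorem exists_homothetyOn (hg : g ∈ PLo (Ici a)) :
    ∃ m e, 0 < m ∧ 0 < e ∧ HomothetyOn a m e g := by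
  obtain ⟨B, hB⟩ := hg.2.1
  have hB_near : ∀ᶠ t in 𝓝[>] a, t ∉ B :=
    (nhdsGT_le_nhdsNE a).trans (nhdsNE_le_cofinite a) B.finite_toSet.eventually_cofinite_notMem
  obtain ⟨u, hau : a < u, hu⟩ := mem_nhdsGT_iff_exists_Ioo_subset.1 hB_near
  obtain ⟨m, b, hmb⟩ := exists_eqOn_affine_of_locally_affine (s := Ioo a u) isPreconnected_Ioo
    fun t ht => by
      obtain ⟨m, b, ε, hε, h⟩ := hB t (hu ht)
      refine ⟨m, b, Metric.eventually_nhds_iff.2 ⟨ε, hε, fun {v} hv => h v ?_⟩⟩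
      rwa [Real.dist_eq] at hv
  replace hmb : EqOn g (fun t => m * t + b) (Icc a u) := by
    simpa [closure_Ioo hau.ne] using hmb.closure (PLo.continuous hg) (by fun_prop)
  have hb : b = a - m * a := by linarith [hmb (left_mem_Icc.2 hau.le), apply_eq_of_Ici hg]
  have hm : 0 < m := by
    have := hg.1 hau
    rw [hmb (left_mem_Icc.2 hau.le), hmb (right_mem_Icc.2 hau.le), hb] at this
    nlinarith
  refine ⟨m, u - a, hm, sub_pos.2 hau, fun t ht => ?_⟩
  rw [add_sub_cancel] at ht
  rw [hmb ht, hb]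
  ring

theorem rightSlope_pos (hg : g ∈ PLo (Ici a)) : 0 < rightSlope g a := by
  obtain ⟨m, e, hm, he, hme⟩ := exists_homothetyOn hg
  rwa [hme.rightSlope_eq he]

theorem homothetyOn_rightSlope (hg : g ∈ PLo (Ici a)) :
    ∃ e, 0 < e ∧ HomothetyOn a (rightSlope g a) e g := by
  obtain ⟨m, e, -, he, hme⟩ := exists_homothetyOn hg
  exact ⟨e, he, hme.rightSlope_eq he ▸ hme⟩

theorem rightSlope_mul (hg : g ∈ PLo (Ici a)) (hh : h ∈ PLo (Ici a)) :
    rightSlope ⇑(g * h) a = rightSlope g a * rightSlope h a := by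
  obtain ⟨m₁, e₁, -, he₁, hg₁⟩ := exists_homothetyOn hg
  obtain ⟨m₂, e₂, hm₂, he₂, hh₂⟩ := exists_homothetyOn hh
  have hcomp : HomothetyOn a (m₁ * m₂) (min e₂ (e₁ / m₂)) (g ∘ h) :=
    hg₁.comp (hh₂.mono (min_le_left _ _)) hm₂.le
      ((le_div_iff₀' hm₂).1 (min_le_right _ _))
  rw [Perm.coe_mul, hcomp.rightSlope_eq (lt_min he₂ (div_pos he₁ hm₂)),
    hg₁.rightSlope_eq he₁, hh₂.rightSlope_eq he₂]

theorem rightSlope_inv (hg : g ∈ PLo (Ici a)) : rightSlope ⇑g⁻¹ a = (rightSlope g a)⁻¹ := by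
  obtain ⟨m, e, hm, he, hme⟩ := exists_homothetyOn hg
  rw [(hme.inv hm).rightSlope_eq (mul_pos hm he), hme.rightSlope_eq he]

end PLo

theorem rightSlope_one (a : ℝ) : rightSlope ⇑(1 : Perm ℝ) a = 1 :=
  derivWithin_id _ _ (uniqueDiffOn_Ici a a self_mem_Ici)

/-- `σ_ℓ`, with values in the multiplicative group of positive reals. -/
noncomputable def slopeHom {a : ℝ} (G : Subgroup (Perm ℝ))
    (hG : (G : Set (Perm ℝ)) ⊆ PLo (Ici a)) : G →* {x : ℝ // 0 < x} where
  toFun g := ⟨rightSlope g a, PLo.rightSlope_pos (hG g.2)⟩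
  map_one' := Subtype.ext (rightSlope_one a)
  map_mul' g h := Subtype.ext (PLo.rightSlope_mul (hG g.2) (hG h.2))

@[simp]
theorem coe_slopeHom {a : ℝ} {G : Subgroup (Perm ℝ)} (hG : (G : Set (Perm ℝ)) ⊆ PLo (Ici a))
    (g : G) : (slopeHom G hG g : ℝ) = rightSlope g a :=
  rfl

theorem exists_mul_zpow_mem_Ioc {x q : ℝ} (hx : 0 < x) (hq0 : 0 < q) (hq1 : q < 1) :
    ∃ k : ℤ, x * q ^ k ∈ Ioc q 1 := by
  obtain ⟨n, hn⟩ := exists_mem_Ioc_zpow hx ((one_lt_inv₀ hq0).2 hq1)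
  have hqn : 0 < q ^ (n + 1) := zpow_pos hq0 _
  refine ⟨n + 1, ?_, ?_⟩
  · have := mul_lt_mul_of_pos_right hn.1 hqn
    rwa [inv_zpow', ← zpow_add₀ hq0.ne', neg_add_cancel_left, zpow_one] at this
  · have := mul_le_mul_of_nonneg_right hn.2 hqn.le
    rwa [inv_zpow', ← zpow_add₀ hq0.ne', neg_add_cancel, zpow_zero] at this

def nearHomotheties (G : Subgroup (Perm ℝ)) (a δ : ℝ) : Set G :=
  {x | IsHomothetyOn a δ ⇑(x : Perm ℝ) ∧ IsHomothetyOn a δ ⇑((x⁻¹ : G) : Perm ℝ)}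

theorem exists_conj_pow_mem_nearHomotheties {a : ℝ} {G : Subgroup (Perm ℝ)}
    (hG : (G : Set (Perm ℝ)) ⊆ PLo (Ici a)) {l : G} {e : ℝ} (he : 0 < e)
    (hl : HomothetyOn a (rightSlope l a) e l) (hl1 : rightSlope l a < 1) {g : G}
    (hg : rightSlope g a ∈ Ioc (rightSlope l a) 1) :
    ∃ N : ℕ, (l ^ N)⁻¹ * g * l ^ N ∈ nearHomotheties G a (rightSlope l a * e) := by
  have hq0 : 0 < rightSlope l a := PLo.rightSlope_pos (hG l.2)
  have hg0 : 0 < rightSlope g a := hq0.trans hg.1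
  obtain ⟨e', he', hg'⟩ := PLo.homothetyOn_rightSlope (hG g.2)
  obtain ⟨N, hN⟩ := exists_pow_lt_of_lt_one (div_pos he' he) hl1
  have hconj : HomothetyOn a (rightSlope g a) e ⇑(((l ^ N)⁻¹ * g * l ^ N : G) : Perm ℝ) := by
    simpa using hl.conj_pow hq0 hl1.le he.le hg' hg0.le hg.2 ((lt_div_iff₀ he).1 hN).le
  refine ⟨N, ⟨_, hconj.mono (mul_le_of_le_one_left he.le hl1.le)⟩, ⟨(rightSlope g a)⁻¹, ?_⟩⟩
  simpa using (hconj.inv hg0).mono (by nlinarith [hg.1])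

theorem closure_nearHomotheties_eq_top {a : ℝ} {G : Subgroup (Perm ℝ)}
    (hG : (G : Set (Perm ℝ)) ⊆ PLo (Ici a)) {l : G} {e : ℝ} (he : 0 < e)
    (hl : HomothetyOn a (rightSlope l a) e l) (hl1 : rightSlope l a < 1) :
    Subgroup.closure (nearHomotheties G a (rightSlope l a * e)) = ⊤ := by
  have hq0 : 0 < rightSlope l a := PLo.rightSlope_pos (hG l.2)
  have hlX : l ∈ Subgroup.closure (nearHomotheties G a (rightSlope l a * e)) :=
    Subgroup.subset_closure
      ⟨⟨_, hl.mono (mul_le_of_le_one_left he.le hl1.le)⟩, ⟨_, hl.inv hq0⟩⟩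
  rw [Subgroup.eq_top_iff']
  intro g
  obtain ⟨k, hk⟩ := exists_mul_zpow_mem_Ioc (PLo.rightSlope_pos (hG g.2)) hq0 hl1
  have hslope :
      rightSlope ⇑((g * l ^ k : G) : Perm ℝ) a = rightSlope g a * rightSlope l a ^ k := by
    rw [← coe_slopeHom hG, map_mul, map_zpow, Positive.val_mul, Positive.coe_zpow]
    rfl
  rw [← hslope] at hk
  obtain ⟨N, hN⟩ := exists_conj_pow_mem_nearHomotheties hG he hl hl1 hk
  have hg : g = l ^ N * ((l ^ N)⁻¹ * (g * l ^ k) * l ^ N) * (l ^ N)⁻¹ * (l ^ k)⁻¹ := by group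
  rw [hg]
  exact mul_mem (mul_mem (mul_mem (pow_mem hlX N) (Subgroup.subset_closure hN))
    (inv_mem (pow_mem hlX N))) (inv_mem (zpow_mem hlX k))

theorem sInf_orbit_eq {a c : ℝ} {G : Subgroup (Perm ℝ)} (hG : (G : Set (Perm ℝ)) ⊆ PLo (Icc a c))
    (hirr : ∀ t : ℝ, a < t → t < c → ∃ g ∈ G, g t ≠ t) {t : ℝ} (ht : t ∈ Ioo a c) :
    sInf (MulAction.orbit G t) = a := by
  set O := MulAction.orbit G t
  have hGa : ∀ u : G, (u : Perm ℝ) a = a :=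
    fun u => PLo.apply_eq_of_Ici (PLo_mono Icc_subset_Ici_self (hG u.2))
  have hO : ∀ s ∈ O, a ≤ s := by
    rintro _ ⟨u, rfl⟩
    change a ≤ (u : Perm ℝ) t
    simpa [hGa u] using (hG u.2).1.monotone ht.1.le
  have hbdd : BddBelow O := ⟨a, hO⟩
  -- an increasing homeomorphism commutes with `sInf` and preserves the orbit
  have hfix : ∀ u : G, (u : Perm ℝ) (sInf O) = sInf O := fun u => by
    rw [Monotone.map_csInf_of_continuousAt (PLo.continuous (hG u.2)).continuousAt
      (hG u.2).1.monotone (MulAction.nonempty_orbit t) hbdd]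
    exact congrArg sInf (MulAction.smul_orbit u t)
  refine le_antisymm (not_lt.1 fun hlt => ?_) (le_csInf (MulAction.nonempty_orbit t) hO)
  obtain ⟨g, hgG, hg⟩ := hirr _ hlt ((csInf_le hbdd (MulAction.mem_orbit_self t)).trans_lt ht.2)
  exact hg (hfix ⟨g, hgG⟩)

open scoped commutatorElement in
theorem MonoidHom.exists_ne_one_map_eq_one {Γ A : Type*} [Group Γ] [CommGroup A] (f : Γ →* A)
    {g h : Γ} (hgh : g * h ≠ h * g) : ∃ k ≠ 1, f k = 1 :=
  ⟨⁅g, h⁆, mt commutatorElement_eq_one_iff_mul_comm.1 hgh,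
    by rw [map_commutatorElement, commutatorElement_eq_one_iff_mul_comm, mul_comm]⟩

theorem exists_rightSlope_eq_one_apply_ne {a c : ℝ} {G : Subgroup (Perm ℝ)}
    (hG : (G : Set (Perm ℝ)) ⊆ PLo (Icc a c)) (hna : ∃ g ∈ G, ∃ h ∈ G, g * h ≠ h * g)
    (hirr : ∀ t : ℝ, a < t → t < c → ∃ g ∈ G, g t ≠ t) {δ : ℝ} (hδ : 0 < δ) :
    ∃ k : G, rightSlope k a = 1 ∧ ∃ s ∈ Icc a (a + δ), (k : Perm ℝ) s ≠ s := by
  have hG' : (G : Set (Perm ℝ)) ⊆ PLo (Ici a) := hG.trans (PLo_mono Icc_subset_Ici_self)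
  obtain ⟨g, hg, h, hh, hgh⟩ := hna
  obtain ⟨k, hk1, hk⟩ := (slopeHom G hG').exists_ne_one_map_eq_one
    (g := ⟨g, hg⟩) (h := ⟨h, hh⟩) fun e => hgh (congrArg Subtype.val e)
  obtain ⟨t, ht⟩ : ∃ t, (k : Perm ℝ) t ≠ t := by
    by_contra! hfix
    exact hk1 (Subtype.ext (Equiv.ext hfix))
  have htI : t ∈ Ioo a c := by
    by_contra htI
    exact ht (PLo.apply_eq_self (hG k.2) (by rwa [interior_Icc]))
  obtain ⟨_, ⟨u, rfl⟩, hut⟩ := exists_lt_of_csInf_lt (MulAction.nonempty_orbit t)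
    ((sInf_orbit_eq hG hirr htI).trans_lt (lt_add_of_pos_right a hδ))
  refine ⟨u * k * u⁻¹, ?_, (u : Perm ℝ) t, ⟨?_, hut.le⟩, ?_⟩
  · rw [← coe_slopeHom hG', map_mul, map_mul, map_inv, mul_inv_cancel_comm, hk]
    rfl
  · simpa [PLo.apply_eq_of_Ici (hG' u.2)] using (hG u.2).1.monotone htI.1.le
  · simpa using ht

theorem CayleyConnected.induction {Γ : Type*} [Group Γ] {X : Set Γ} {χ : Γ → ℝ}
    (hX : CayleyConnected X χ) (P : Γ → Prop) {g₀ g : Γ} (hg₀ : 0 ≤ χ g₀) (hg : 0 ≤ χ g)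
    (h₀ : P g₀) (hstep : ∀ w, 0 ≤ χ w → P w → ∀ x ∈ X, P (w * x) ∧ P (w * x⁻¹)) : P g := by
  have hpath := hX g₀ g hg₀ hg
  clear hg
  induction hpath with
  | refl => exact h₀
  | tail _ hedge ih =>
    obtain ⟨hw, -, x, hx, rfl | rfl⟩ := hedge
    · exact (hstep _ hw ih x hx).1
    · simpa using (hstep _ hw ih x hx).2

theorem isHomothetyOn_mul_inv {a δ : ℝ} {G : Subgroup (Perm ℝ)}
    (hG : (G : Set (Perm ℝ)) ⊆ PLo (Ici a)) (hδ : 0 < δ) {w y : G} (hw : 1 ≤ rightSlope w a)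
    (hw' : IsHomothetyOn a δ ⇑((w⁻¹ : G) : Perm ℝ)) (hy : IsHomothetyOn a δ ⇑(y : Perm ℝ)) :
    IsHomothetyOn a δ ⇑((y * w⁻¹ : G) : Perm ℝ) := by
  obtain ⟨m, hm⟩ := hw'
  obtain ⟨m', hm'⟩ := hy
  -- the slope of `w⁻¹` at `a` is at most `1`, so `w⁻¹` maps `[a, a + δ]` into itself
  have hm_eq : m = (rightSlope w a)⁻¹ := by
    rw [← hm.rightSlope_eq hδ]
    exact PLo.rightSlope_inv (hG w.2)
  have hm0 : 0 ≤ m := hm_eq ▸ inv_nonneg.2 (zero_le_one.trans hw)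
  exact ⟨m' * m, hm'.comp hm hm0 (mul_le_of_le_one_left hδ.le (hm_eq ▸ inv_le_one_of_one_le₀ hw))⟩

theorem exists_rightSlope_lt_one {a : ℝ} {G : Subgroup (Perm ℝ)}
    (hG : (G : Set (Perm ℝ)) ⊆ PLo (Ici a)) (hχ : ∃ g : G, chiL G a g ≠ 0) :
    ∃ l : G, rightSlope l a < 1 := by
  obtain ⟨g, hg⟩ := hχ
  have hg1 : rightSlope g a ≠ 1 := fun h => hg (by simp [chiL, h])
  rcases hg1.lt_or_gt with h | h
  · exact ⟨g, h⟩
  · refine ⟨g⁻¹, ?_⟩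
    rw [Subgroup.coe_inv, PLo.rightSlope_inv (hG g.2)]
    exact inv_lt_one_of_one_lt₀ h

theorem not_memSigma1_chiL {a c : ℝ} {G : Subgroup (Perm ℝ)}
    (hG : (G : Set (Perm ℝ)) ⊆ PLo (Icc a c)) (hna : ∃ g ∈ G, ∃ h ∈ G, g * h ≠ h * g)
    (hirr : ∀ t : ℝ, a < t → t < c → ∃ g ∈ G, g t ≠ t) (hχ : ∃ g : G, chiL G a g ≠ 0) :
    ¬ MemSigma1 (chiL G a) := by
  intro hmem
  have hG' : (G : Set (Perm ℝ)) ⊆ PLo (Ici a) := hG.trans (PLo_mono Icc_subset_Ici_self)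
  obtain ⟨l, hl1⟩ := exists_rightSlope_lt_one hG' hχ
  obtain ⟨e, he, hl⟩ := PLo.homothetyOn_rightSlope (hG' l.2)
  set δ := rightSlope l a * e
  have hδ : 0 < δ := mul_pos (PLo.rightSlope_pos (hG' l.2)) he
  obtain ⟨k, hk1, s, hs, hks⟩ := exists_rightSlope_eq_one_apply_ne hG hna hirr hδ
  have hchiL_nonneg : ∀ g : G, 0 ≤ chiL G a g ↔ 1 ≤ rightSlope g a :=
    fun g => Real.log_nonneg_iff (PLo.rightSlope_pos (hG' g.2))
  have hk : IsHomothetyOn a δ ⇑((k⁻¹ : G) : Perm ℝ) := by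
    refine (hmem _ (closure_nearHomotheties_eq_top hG' he hl hl1)).induction
      (fun w : G => IsHomothetyOn a δ ⇑((w⁻¹ : G) : Perm ℝ)) (g₀ := 1) ?_ ?_ ?_ ?_
    · exact (hchiL_nonneg 1).2 (rightSlope_one a).ge
    · simp [hchiL_nonneg, hk1]
    · exact ⟨1, fun t _ => by simp⟩
    · intro w hw hw' x hx
      rw [hchiL_nonneg] at hw
      exact ⟨by simpa using isHomothetyOn_mul_inv hG' hδ hw hw' hx.2,
        by simpa using isHomothetyOn_mul_inv hG' hδ hw hw' hx.1⟩
  obtain ⟨m, hm⟩ := hk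
  have hm1 : m = 1 := by
    rw [← hm.rightSlope_eq hδ, Subgroup.coe_inv, PLo.rightSlope_inv (hG' k.2), hk1, inv_one]
  apply hks
  have hks' : (k : Perm ℝ)⁻¹ s = s := by simpa [hm1] using hm hs
  exact (Perm.inv_eq_iff_eq.1 hks').symm

theorem MemSigma1.of_mulEquiv {Γ Δ : Type*} [Group Γ] [Group Δ] (φ : Γ ≃* Δ) {χ : Γ → ℝ}
    {ψ : Δ → ℝ} (hψ : ∀ g, ψ (φ g) = χ g) (hχ : MemSigma1 χ) : MemSigma1 ψ := by
  intro X hX g h hg hh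
  have hX' : Subgroup.closure (φ.symm '' X) = ⊤ := by
    rw [← MulEquiv.coe_toMonoidHom, ← MonoidHom.map_closure, hX,
      Subgroup.map_top_of_surjective _ φ.symm.surjective]
  have hpath := hχ _ hX' (φ.symm g) (φ.symm h) (by rwa [← hψ, φ.apply_symm_apply])
    (by rwa [← hψ, φ.apply_symm_apply])
  rw [← φ.apply_symm_apply g, ← φ.apply_symm_apply h]
  refine hpath.lift φ ?_
  rintro u v ⟨hu, hv, _, ⟨x, hx, rfl⟩, huv⟩
  refine ⟨by rwa [hψ], by rwa [hψ], x, hx, ?_⟩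
  rcases huv with rfl | rfl <;> simp

theorem IsFinitaryPL.reflect {g : ℝ → ℝ} (hg : IsFinitaryPL g) (r : ℝ) :
    IsFinitaryPL fun t => r - g (r - t) := by
  obtain ⟨B, hB⟩ := hg
  refine ⟨B.image (r - ·), fun t ht => ?_⟩
  obtain ⟨m, b, ε, hε, h⟩ :=
    hB (r - t) fun h => ht (Finset.mem_image.2 ⟨r - t, h, sub_sub_cancel r t⟩)
  refine ⟨m, r - m * r - b, ε, hε, fun u hu => ?_⟩
  show r - g (r - u) = _
  rw [h (r - u) (by rwa [sub_sub_sub_cancel_left, abs_sub_comm])]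
  ring

theorem coe_conj_subLeft (r : ℝ) (g : Perm ℝ) :
    ⇑(MulAut.conj (Equiv.subLeft r) g) = fun t => r - g (r - t) := by
  ext t
  simp [Perm.mul_apply, Perm.inv_def, neg_add_eq_sub]

theorem conj_subLeft_mem_PLo {a c : ℝ} {g : Perm ℝ} (hg : g ∈ PLo (Icc a c)) :
    MulAut.conj (Equiv.subLeft (a + c)) g ∈ PLo (Icc a c) := by
  refine ⟨?_, ?_, ?_⟩ <;> rw [coe_conj_subLeft]
  · exact fun s t hst => sub_lt_sub_left (hg.1 (sub_lt_sub_left hst _)) _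
  · exact hg.2.1.reflect _
  · intro t ht
    have : a + c - t ∈ Icc a c := hg.2.2 fun h => ht (by simp [h])
    exact ⟨by linarith [this.2], by linarith [this.1]⟩

theorem rightSlope_reflect (a c : ℝ) (g : ℝ → ℝ) :
    rightSlope (fun t => a + c - g (a + c - t)) a = leftSlope g c := by
  simp [rightSlope, leftSlope, derivWithin_const_sub, derivWithin_comp_const_sub, ← image_vadd]

theorem not_memSigma1_chiR {a c : ℝ} {G : Subgroup (Perm ℝ)}
    (hG : (G : Set (Perm ℝ)) ⊆ PLo (Icc a c)) (hna : ∃ g ∈ G, ∃ h ∈ G, g * h ≠ h * g)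
    (hirr : ∀ t : ℝ, a < t → t < c → ∃ g ∈ G, g t ≠ t) (hχ : ∃ g : G, chiR G c g ≠ 0) :
    ¬ MemSigma1 (chiR G c) := by
  set κ := MulAut.conj (Equiv.subLeft (a + c))
  set φ := G.equivMapOfInjective κ.toMonoidHom κ.injective
  have hφ : ∀ g : G, chiL _ a (φ g) = chiR G c g := fun g => congrArg Real.log <| by
    show rightSlope ⇑(κ g) a = _
    rw [coe_conj_subLeft, rightSlope_reflect]
  have hG' : ((G.map κ.toMonoidHom : Subgroup (Perm ℝ)) : Set (Perm ℝ)) ⊆ PLo (Icc a c) := by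
    rintro _ ⟨g, hg, rfl⟩
    exact conj_subLeft_mem_PLo (hG hg)
  have hna' : ∃ g ∈ G.map κ.toMonoidHom, ∃ h ∈ G.map κ.toMonoidHom, g * h ≠ h * g := by
    obtain ⟨g, hg, h, hh, hgh⟩ := hna
    exact ⟨κ g, ⟨g, hg, rfl⟩, κ h, ⟨h, hh, rfl⟩, by rwa [← map_mul, ← map_mul, κ.injective.ne_iff]⟩
  have hirr' : ∀ t : ℝ, a < t → t < c → ∃ g ∈ G.map κ.toMonoidHom, g t ≠ t := by
    intro t hat htc
    obtain ⟨g, hg, hgt⟩ := hirr (a + c - t) (by linarith) (by linarith)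
    refine ⟨κ g, ⟨g, hg, rfl⟩, fun h => hgt ?_⟩
    rw [coe_conj_subLeft] at h
    linarith
  obtain ⟨g, hg⟩ := hχ
  exact fun hmem => not_memSigma1_chiL hG' hna' hirr' ⟨φ g, by rwa [hφ]⟩ (hmem.of_mulEquiv φ hφ)

theorem chiL_chiR_not_memSigma1_general
    (a c : ℝ)
    (G : Subgroup (Equiv.Perm ℝ)) (hG : (G : Set (Equiv.Perm ℝ)) ⊆ PLo (Icc a c))
    (hna : ∃ g ∈ G, ∃ h ∈ G, g * h ≠ h * g)
    (hirr : ∀ t : ℝ, a < t → t < c → ∃ g ∈ G, g t ≠ t) :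
    ((∃ g : G, chiL G a g ≠ 0) → ¬ MemSigma1 (chiL G a)) ∧
    ((∃ g : G, chiR G c g ≠ 0) → ¬ MemSigma1 (chiR G c)) :=
  ⟨not_memSigma1_chiL hG hna hirr, not_memSigma1_chiR hG hna hirr⟩

/-- **Proposition (Statement 7).** For a non-abelian irreducible `G ≤ PL_o([a,c])`:
if `χ_ℓ` is non-zero then `[χ_ℓ] ∉ Σ¹(G)`, and likewise for `χ_r`. -/
theorem chiL_chiR_not_memSigma1
    (a c : ℝ) (hac : a < c)
    (G : Subgroup (Equiv.Perm ℝ)) (hG : (G : Set (Equiv.Perm ℝ)) ⊆ PLo (Icc a c))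
    (hna : ∃ g ∈ G, ∃ h ∈ G, g * h ≠ h * g)
    (hirr : ∀ t : ℝ, a < t → t < c → ∃ g ∈ G, g t ≠ t) :
    ((∃ g : G, chiL G a g ≠ 0) → ¬ MemSigma1 (chiL G a)) ∧
    ((∃ g : G, chiR G c g ≠ 0) → ¬ MemSigma1 (chiR G c)) :=
  chiL_chiR_not_memSigma1_general a c G hG hna hirr
end
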